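/- arXiv:1402.5460 — 9 statements merged into one kernel-verified Lean document; each statement's English description precedes it below -/
import Mathlib

section
/- Define T: ℝ → ℝ by Tx = 0 if |x| ≤ 1, Tx = x - 1 if x > 1, and Tx = x + 1 if x < -1. Then Fix T = {0}, and for every ρ > 0 and every x with |x| ≤ ρ one has |x| ≤ max{ρ,1}·|x - Tx|; however, there is no κ ≥ 0 with |x| ≤ κ|x - Tx| for all x ∈ ℝ. -/
/-!
The displacement `|x - T x|` equals `min |x| 1`: it vanishes only at `0`, grows like `|x|` near `0`
and is capped at `1`. On a ball of radius `ρ` the cap costs at most a factor `max ρ 1`,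
but on all of `ℝ` it rules out any global constant `κ`, witnessed by `x = κ + 1`.
-/

noncomputable def softThreshold (x : ℝ) : ℝ :=
  if |x| ≤ 1 then 0 else if x > 1 then x - 1 else x + 1

lemma abs_sub_softThreshold (x : ℝ) : |x - softThreshold x| = min |x| 1 := by
  unfold softThreshold
  split_ifs with hsmall hpos
  · rw [sub_zero, min_eq_left hsmall]
  · rw [sub_sub_cancel, abs_one, min_eq_right (by linarith [le_abs_self x])]
  · rw [sub_add_cancel_left, abs_neg, abs_one, min_eq_right (by linarith)]

lemma softThreshold_eq_self_iff (x : ℝ) : softThreshold x = x ↔ x = 0 := by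
  rw [← sub_eq_zero, ← abs_eq_zero, abs_sub_comm, abs_sub_softThreshold]
  simp only [min_eq_iff, abs_eq_zero, one_ne_zero, false_and, or_false, and_iff_left_iff_imp]
  rintro rfl
  simp

lemma le_max_mul_min_one {a ρ : ℝ} (ha : 0 ≤ a) (haρ : a ≤ ρ) : a ≤ max ρ 1 * min a 1 := by
  rcases le_total a 1 with h | h
  · rw [min_eq_left h]
    exact le_mul_of_one_le_left ha (le_max_right ρ 1)
  · rw [min_eq_right h, mul_one]
    exact haρ.trans (le_max_left ρ 1)

lemma not_exists_abs_le_mul_abs_sub_softThreshold :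
    ¬ ∃ κ : ℝ, 0 ≤ κ ∧ ∀ x : ℝ, |x| ≤ κ * |x - softThreshold x| := by
  rintro ⟨κ, hκ, h⟩
  have hbound := h (κ + 1)
  rw [abs_sub_softThreshold, abs_of_nonneg (by linarith)] at hbound
  have : κ * min (κ + 1) 1 ≤ κ := mul_le_of_le_one_right hκ (min_le_right _ _)
  linarith

/-- The thresholder is boundedly linearly regular but not linearly regular. -/
theorem thresholder_boundedly_linearly_regular_not_linearly_regular
    (T : ℝ → ℝ)
    (hT : ∀ x : ℝ, T x = if |x| ≤ 1 then 0 else if x > 1 then x - 1 else x + 1) :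
    {x : ℝ | T x = x} = {0} ∧
    (∀ ρ > (0:ℝ), ∀ x : ℝ, |x| ≤ ρ → |x| ≤ max ρ 1 * |x - T x|) ∧
    ¬ ∃ κ : ℝ, 0 ≤ κ ∧ ∀ x : ℝ, |x| ≤ κ * |x - T x| := by
  obtain rfl : T = softThreshold := funext hT
  refine ⟨Set.ext softThreshold_eq_self_iff, fun ρ _ x hx => ?_,
    not_exists_abs_le_mul_abs_sub_softThreshold⟩
  rw [abs_sub_softThreshold]
  exact le_max_mul_min_one (abs_nonneg x) hx
end

section
/- Let T: X → X be a linear nonexpansive operator on a real Hilbert space X such that ran(Id - T) is closed. Then there exists β > 0 such that for all x ∈ X, ‖x - Tx‖ ≥ β·d_{Fix T}(x); i.e., T is linearly regular. -/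
/-!
`Id - T` is a bounded operator with closed range, so it maps the Banach space `X` onto the Banach
space `ran(Id - T)`. By the open mapping theorem every `y = x - T x` has a preimage `x'` with
`‖x'‖ ≤ C ‖y‖`; then `x - x'` is a fixed point of `T`, so `d_{Fix T}(x) ≤ ‖x'‖ ≤ C ‖x - T x‖`.
-/

open Metric

namespace ContinuousLinearMap

variable {𝕜 E F : Type*} [NontriviallyNormedField 𝕜]
  [NormedAddCommGroup E] [NormedSpace 𝕜 E] [CompleteSpace E]
  [NormedAddCommGroup F] [NormedSpace 𝕜 F] [CompleteSpace F]

theorem exists_preimage_norm_le_of_isClosed_range (f : E →L[𝕜] F)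
    (hf : IsClosed (Set.range f)) :
    ∃ C > 0, ∀ x, ∃ x', f x' = f x ∧ ‖x'‖ ≤ C * ‖f x‖ := by
  have : CompleteSpace f.range :=
    (show IsClosed (f.range : Set F) by rwa [LinearMap.coe_range]).completeSpace_coe
  obtain ⟨C, hC, hpre⟩ := exists_preimage_norm_le f.rangeRestrict f.surjective_rangeRestrict
  refine ⟨C, hC, fun x => ?_⟩
  obtain ⟨x', hx', hx'le⟩ := hpre (f.rangeRestrict x)
  exact ⟨x', congrArg Subtype.val hx', hx'le⟩

theorem exists_infDist_ker_le_of_isClosed_range (f : E →L[𝕜] F)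
    (hf : IsClosed (Set.range f)) :
    ∃ C > 0, ∀ x, infDist x (f.ker : Set E) ≤ C * ‖f x‖ := by
  obtain ⟨C, hC, hpre⟩ := f.exists_preimage_norm_le_of_isClosed_range hf
  refine ⟨C, hC, fun x => ?_⟩
  obtain ⟨x', hx', hx'le⟩ := hpre x
  have hker : x - x' ∈ f.ker := by simp [hx']
  calc infDist x (f.ker : Set E) ≤ dist x (x - x') := infDist_le_dist_of_mem hker
    _ = ‖x'‖ := by rw [dist_eq_norm, sub_sub_cancel]
    _ ≤ C * ‖f x‖ := hx'le

end ContinuousLinearMap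

theorem linear_nonexpansive_closed_range_linearly_regular_general
    {X : Type*} [NormedAddCommGroup X] [InnerProductSpace ℝ X] [CompleteSpace X]
    (T : X →L[ℝ] X)
    (hran : IsClosed (Set.range fun x => x - T x)) :
    ∃ β > (0:ℝ), ∀ x, ‖x - T x‖ ≥ β * infDist x {y | T y = y} := by
  obtain ⟨C, hC, hdist⟩ :=
    (ContinuousLinearMap.id ℝ X - T).exists_infDist_ker_le_of_isClosed_range hran
  have hker : ((ContinuousLinearMap.id ℝ X - T).ker : Set X) = {y | T y = y} := by
    ext y
    simp [sub_eq_zero, eq_comm (a := y)]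
  refine ⟨C⁻¹, inv_pos.mpr hC, fun x => ?_⟩
  rw [← hker, ge_iff_le, inv_mul_le_iff₀ hC]
  exact hdist x

/-- A linear nonexpansive operator with closed range of `Id - T` is linearly regular. -/
theorem linear_nonexpansive_closed_range_linearly_regular
    {X : Type*} [NormedAddCommGroup X] [InnerProductSpace ℝ X] [CompleteSpace X]
    (T : X →L[ℝ] X) (hT : ∀ x, ‖T x‖ ≤ ‖x‖)
    (hran : IsClosed (Set.range fun x => x - T x)) :
    ∃ β > (0:ℝ), ∀ x, ‖x - T x‖ ≥ β * infDist x {y | T y = y} :=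
  linear_nonexpansive_closed_range_linearly_regular_general T hran
end

section
/- Suppose X = ℝ², let θ ∈ (0, π/2], U = ℝ·(1,0), V = ℝ·(cos θ, sin θ), and let T = P_V P_U + P_{V^⊥} P_{U^⊥} be the Douglas–Rachford operator for the two lines. Then Fix T = {0} and ‖x - Tx‖ = sin(θ)·‖x‖ for all x ∈ ℝ²; hence T is linearly regular with constant 1/sin(θ). -/
open Metric Real

/-!
Writing `T = P_V P_U + (1 - P_V)(1 - P_U)` gives `x - T x = P_U x + P_V x - 2 P_V P_U x`. For lines
spanned by unit vectors `u`, `v` this makes `‖x - T x‖²` the quadratic form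
`⟪u, x⟫² + ⟪v, x⟫² - 2 ⟪u, v⟫ ⟪u, x⟫ ⟪v, x⟫`, which in the plane with `u = (1, 0)`,
`v = (cos θ, sin θ)` equals `sin² θ ‖x‖²`. Since `sin θ > 0`, the only fixed point is `0`, and the
distance to it, `‖x‖`, is `‖x - T x‖ / sin θ`.
-/

section DouglasRachford

open RealInnerProductSpace

variable {E : Type*} [NormedAddCommGroup E] [InnerProductSpace ℝ E]

noncomputable def douglasRachford (K L : Submodule ℝ E) [K.HasOrthogonalProjection]
    [L.HasOrthogonalProjection] (x : E) : E :=
  L.starProjection (K.starProjection x) + Lᗮ.starProjection (Kᗮ.starProjection x)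

theorem sub_douglasRachford (K L : Submodule ℝ E) [K.HasOrthogonalProjection]
    [L.HasOrthogonalProjection] (x : E) :
    x - douglasRachford K L x =
      K.starProjection x + L.starProjection x - (2 : ℝ) • L.starProjection (K.starProjection x) := by
  simp only [douglasRachford, Submodule.starProjection_orthogonal_val, map_sub]
  module

theorem norm_sub_douglasRachford_span_singleton_sq {u v : E} (hu : ‖u‖ = 1) (hv : ‖v‖ = 1)
    (x : E) :
    ‖x - douglasRachford (ℝ ∙ u) (ℝ ∙ v) x‖ ^ 2 =
      ⟪u, x⟫ ^ 2 + ⟪v, x⟫ ^ 2 - 2 * ⟪u, v⟫ * ⟪u, x⟫ * ⟪v, x⟫ := by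
  have hdiff : x - douglasRachford (ℝ ∙ u) (ℝ ∙ v) x =
      ⟪u, x⟫ • u + (⟪v, x⟫ - 2 * ⟪u, x⟫ * ⟪u, v⟫) • v := by
    rw [sub_douglasRachford, Submodule.starProjection_unit_singleton ℝ hu,
      Submodule.starProjection_unit_singleton ℝ hv, Submodule.starProjection_unit_singleton ℝ hv,
      inner_smul_right, real_inner_comm v u]
    module
  rw [hdiff, norm_add_sq_real, norm_smul, norm_smul, inner_smul_left, inner_smul_right, hu, hv]
  simp only [Real.norm_eq_abs, mul_one, sq_abs, conj_trivial]
  ring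

end DouglasRachford

theorem norm_toLp_cos_sin (θ : ℝ) : ‖!₂[cos θ, sin θ]‖ = 1 := by
  simp [EuclideanSpace.norm_eq, Fin.sum_univ_two]

theorem norm_sub_douglasRachford_two_lines {θ : ℝ} (hθ : 0 ≤ sin θ)
    (x : EuclideanSpace ℝ (Fin 2)) :
    ‖x - douglasRachford (ℝ ∙ !₂[1, 0]) (ℝ ∙ !₂[cos θ, sin θ]) x‖ = sin θ * ‖x‖ := by
  have he₁ : ‖(!₂[1, 0] : EuclideanSpace ℝ (Fin 2))‖ = 1 := by
    simpa using norm_toLp_cos_sin 0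
  refine (sq_eq_sq₀ (norm_nonneg _) (by positivity)).1 ?_
  rw [norm_sub_douglasRachford_span_singleton_sq he₁ (norm_toLp_cos_sin θ), mul_pow,
    EuclideanSpace.norm_sq_eq]
  simp [EuclideanSpace.inner_eq_star_dotProduct, Fin.sum_univ_two, dotProduct]
  linear_combination (-x 0 ^ 2) * sin_sq_add_cos_sq θ

theorem setOf_apply_eq_self_eq_zero {F : Type*} [NormedAddCommGroup F] {T : F → F} {c : ℝ}
    (hc : 0 < c) (hT : ∀ x, ‖x - T x‖ = c * ‖x‖) : {x | T x = x} = {0} := by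
  ext x
  rw [Set.mem_singleton_iff, ← norm_eq_zero, ← mul_eq_zero_iff_left hc.ne', ← hT,
    norm_sub_eq_zero_iff]
  exact eq_comm

/-- The Douglas–Rachford operator for two lines in the plane meeting at angle θ. -/
theorem dr_two_lines_linearly_regular
    (θ : ℝ) (hθ : θ ∈ Set.Ioc 0 (π / 2))
    (U V : Submodule ℝ (EuclideanSpace ℝ (Fin 2)))
    (hU : U = Submodule.span ℝ {(WithLp.equiv 2 (Fin 2 → ℝ)).symm ![1, 0]})
    (hV : V = Submodule.span ℝ {(WithLp.equiv 2 (Fin 2 → ℝ)).symm ![Real.cos θ, Real.sin θ]})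
    (T : EuclideanSpace ℝ (Fin 2) → EuclideanSpace ℝ (Fin 2))
    (hT : ∀ x, T x =
      (V.orthogonalProjectionOnto (U.orthogonalProjectionOnto x) : EuclideanSpace ℝ (Fin 2)) +
      (Vᗮ.orthogonalProjectionOnto (Uᗮ.orthogonalProjectionOnto x) : EuclideanSpace ℝ (Fin 2))) :
    {x : EuclideanSpace ℝ (Fin 2) | T x = x} = {0} ∧
    (∀ x : EuclideanSpace ℝ (Fin 2), ‖x - T x‖ = Real.sin θ * ‖x‖) ∧
    ∀ x : EuclideanSpace ℝ (Fin 2),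
      infDist x {x : EuclideanSpace ℝ (Fin 2) | T x = x} ≤ (1 / Real.sin θ) * ‖x - T x‖ := by
  have hsin : 0 < sin θ :=
    sin_pos_of_pos_of_lt_pi hθ.1 (hθ.2.trans_lt (by linarith [pi_pos]))
  have hnorm : ∀ x, ‖x - T x‖ = sin θ * ‖x‖ := by
    obtain rfl : T = douglasRachford U V := funext hT
    subst hU hV
    exact norm_sub_douglasRachford_two_lines hsin.le
  have hfix := setOf_apply_eq_self_eq_zero hsin hnorm
  refine ⟨hfix, hnorm, fun x => ?_⟩
  rw [hfix, infDist_singleton, dist_zero_right, hnorm, one_div, inv_mul_cancel_left₀ hsin.ne']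
end

section
/- Let S: X → X be linear with S* = -S and ‖Sx‖ = ‖x‖ for all x, let α ∈ (0, π/2], β ∈ (-1,1), and set T = β(cos(α)Id + sin(α)S). Then ‖Tx‖ = |β|‖x‖ for all x, ⟨x, Tx⟩ = cos(α)‖x‖‖Tx‖ for all x with β ≥ 0, Fix T = {0}, and T is linearly regular. -/
/-!
Skew-adjointness gives `⟪x, S x⟫ = 0`, so `cos α • x + sin α • S x` is a sum of two orthogonal
vectors and, `S` being an isometry, has the norm of `x`. Hence `‖T x‖ = |β| ‖x‖` with `|β| < 1`:
the only fixed point is `0`, and `(1 - |β|) ‖x‖ ≤ ‖x‖ - ‖T x‖ ≤ ‖x - T x‖` is linear regularity.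
-/

open Metric

section InnerProduct

variable {X : Type*} [NormedAddCommGroup X] [InnerProductSpace ℝ X]

lemma real_inner_self_apply_eq_zero_of_skew {S : X → X}
    (hskew : ∀ x y : X, (inner ℝ (S x) y : ℝ) = -(inner ℝ x (S y) : ℝ)) (x : X) :
    (inner ℝ x (S x) : ℝ) = 0 := by
  have h := hskew x x
  rw [real_inner_comm] at h
  linarith

lemma norm_cos_smul_add_sin_smul {x y : X} (horth : (inner ℝ x y : ℝ) = 0) (hnorm : ‖y‖ = ‖x‖)
    (α : ℝ) : ‖Real.cos α • x + Real.sin α • y‖ = ‖x‖ := by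
  have horth' : (inner ℝ (Real.cos α • x) (Real.sin α • y) : ℝ) = 0 := by
    rw [real_inner_smul_left, real_inner_smul_right, horth, mul_zero, mul_zero]
  have hsq := norm_add_sq_eq_norm_sq_add_norm_sq_real horth'
  rw [norm_smul, norm_smul, hnorm, Real.norm_eq_abs, Real.norm_eq_abs] at hsq
  refine (mul_self_inj (norm_nonneg _) (norm_nonneg _)).1 ?_
  rw [hsq]
  linear_combination (‖x‖ * ‖x‖) *
    (abs_mul_abs_self (Real.cos α) + abs_mul_abs_self (Real.sin α) + Real.cos_sq_add_sin_sq α)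

lemma real_inner_cos_smul_add_sin_smul {x y : X} (horth : (inner ℝ x y : ℝ) = 0) (α : ℝ) :
    (inner ℝ x (Real.cos α • x + Real.sin α • y) : ℝ) = Real.cos α * ‖x‖ * ‖x‖ := by
  rw [inner_add_right, real_inner_smul_right, real_inner_smul_right, horth,
    real_inner_self_eq_norm_mul_norm, mul_zero, add_zero, mul_assoc]

end InnerProduct

section Contraction

variable {E : Type*} [NormedAddCommGroup E] {T : E → E} {c : ℝ}

lemma Function.fixedPoints_eq_zero_of_norm_le_mul (hT : ∀ x, ‖T x‖ ≤ c * ‖x‖) (hc : c < 1) :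
    Function.fixedPoints T = {0} := by
  ext x
  refine ⟨fun hx => ?_, fun hx => ?_⟩
  · have hle : ‖x‖ ≤ c * ‖x‖ := by simpa only [hx.eq] using hT x
    have hx0 : ‖x‖ ≤ 0 := by nlinarith [norm_nonneg x]
    exact norm_le_zero_iff.1 hx0
  · rw [Set.mem_singleton_iff.1 hx]
    exact norm_le_zero_iff.1 (by simpa using hT 0)

lemma norm_le_inv_one_sub_mul_norm_sub_apply (hT : ∀ x, ‖T x‖ ≤ c * ‖x‖) (hc : c < 1) (x : E) :
    ‖x‖ ≤ (1 - c)⁻¹ * ‖x - T x‖ := by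
  rw [le_inv_mul_iff₀ (sub_pos.2 hc)]
  calc (1 - c) * ‖x‖ ≤ ‖x‖ - ‖T x‖ := by linarith [hT x]
    _ ≤ ‖x - T x‖ := norm_sub_norm_le x (T x)

end Contraction

theorem skew_rotation_linearly_regular_general
    {X : Type*} [NormedAddCommGroup X] [InnerProductSpace ℝ X]
    (S : X →L[ℝ] X)
    (hskew : ∀ x y : X, (inner ℝ (S x) y : ℝ) = -(inner ℝ x (S y) : ℝ))
    (hiso : ∀ x : X, ‖S x‖ = ‖x‖)
    (α : ℝ)
    (β : ℝ) (hβ : β ∈ Set.Ioo (-1 : ℝ) 1)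
    (T : X → X)
    (hT : ∀ x, T x = β • (Real.cos α • x + Real.sin α • S x)) :
    (∀ x, ‖T x‖ = |β| * ‖x‖) ∧
    (0 ≤ β → ∀ x, (inner ℝ x (T x) : ℝ) = Real.cos α * ‖x‖ * ‖T x‖) ∧
    {x | T x = x} = {0} ∧
    ∃ κ ≥ (0:ℝ), ∀ x, infDist x {x | T x = x} ≤ κ * ‖x - T x‖ := by
  have horth : ∀ x, (inner ℝ x (S x) : ℝ) = 0 := real_inner_self_apply_eq_zero_of_skew hskew
  have hnorm : ∀ x, ‖T x‖ = |β| * ‖x‖ := fun x => by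
    rw [hT, norm_smul, norm_cos_smul_add_sin_smul (horth x) (hiso x), Real.norm_eq_abs]
  have hβ1 : |β| < 1 := abs_lt.2 hβ
  have hfix : {x | T x = x} = {0} :=
    Function.fixedPoints_eq_zero_of_norm_le_mul (fun x => (hnorm x).le) hβ1
  refine ⟨hnorm, fun hβ0 x => ?_, hfix, (1 - |β|)⁻¹, inv_nonneg.2 (sub_nonneg.2 hβ1.le),
    fun x => ?_⟩
  · rw [hnorm, hT, real_inner_smul_right, real_inner_cos_smul_add_sin_smul (horth x),
      abs_of_nonneg hβ0]
    ring
  · rw [hfix, infDist_singleton, dist_zero_right]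
    exact norm_le_inv_one_sub_mul_norm_sub_apply (fun x => (hnorm x).le) hβ1 x

/-- Scaled rotation-type operator built from a skew isometry is linearly regular. -/
theorem skew_rotation_linearly_regular
    {X : Type*} [NormedAddCommGroup X] [InnerProductSpace ℝ X]
    (S : X →L[ℝ] X)
    (hskew : ∀ x y : X, (inner ℝ (S x) y : ℝ) = -(inner ℝ x (S y) : ℝ))
    (hiso : ∀ x : X, ‖S x‖ = ‖x‖)
    (α : ℝ) (hα : α ∈ Set.Ioc 0 (Real.pi / 2))
    (β : ℝ) (hβ : β ∈ Set.Ioo (-1 : ℝ) 1)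
    (T : X → X)
    (hT : ∀ x, T x = β • (Real.cos α • x + Real.sin α • S x)) :
    (∀ x, ‖T x‖ = |β| * ‖x‖) ∧
    (0 ≤ β → ∀ x, (inner ℝ x (T x) : ℝ) = Real.cos α * ‖x‖ * ‖T x‖) ∧
    {x | T x = x} = {0} ∧
    ∃ κ ≥ (0:ℝ), ∀ x, infDist x {x | T x = x} ≤ κ * ‖x - T x‖ :=
  skew_rotation_linearly_regular_general S hskew hiso α β hβ T hT
end

section
/- Let T: X → X be averaged nonexpansive, boundedly linearly regular with constant κ (on a given ball), and let σ > 0 satisfy σ‖x-Tx‖² ≤ d_{Fix T}(x)² - d_{Fix T}(Tx)² on that ball. Then for α = √(σ^{-1}κ² / (1 + σ^{-1}κ²)) ∈ [0,1), every x in the ball satisfies d_{Fix T}(Tx) ≤ α·d_{Fix T}(x). -/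
/-!
Linear regularity and sufficient decrease chain to
`d(x)² ≤ κ²‖x - Tx‖² ≤ σ⁻¹κ² (d(x)² - d(Tx)²)`; since moreover `d(Tx) ≤ d(x)`, this rearranges to
`(1 + σ⁻¹κ²) d(Tx)² ≤ σ⁻¹κ² d(x)²`, and taking square roots gives the contraction factor.
-/

open Metric

theorem Real.sqrt_div_one_add_mem_Ico {c : ℝ} (hc : 0 ≤ c) :
    √(c / (1 + c)) ∈ Set.Ico (0 : ℝ) 1 := by
  refine ⟨Real.sqrt_nonneg _, ?_⟩
  rw [Real.sqrt_lt' one_pos, one_pow, div_lt_one (by linarith)]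
  linarith

theorem le_sqrt_div_one_add_mul_of_sq_le {a b c : ℝ} (ha : 0 ≤ a) (hb : 0 ≤ b) (hc : 0 ≤ c)
    (h : (1 + c) * b ^ 2 ≤ c * a ^ 2) : b ≤ √(c / (1 + c)) * a := by
  have hb2 : b ^ 2 ≤ c / (1 + c) * a ^ 2 := by
    rw [div_mul_eq_mul_div, le_div_iff₀ (by linarith)]
    linarith
  calc b = √(b ^ 2) := (Real.sqrt_sq hb).symm
    _ ≤ √(c / (1 + c) * a ^ 2) := Real.sqrt_le_sqrt hb2
    _ = √(c / (1 + c)) * a := by rw [Real.sqrt_mul (by positivity), Real.sqrt_sq ha]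

theorem sq_le_of_error_bound_of_sufficient_decrease {a b e κ σ : ℝ} (hσ : 0 < σ) (ha : 0 ≤ a)
    (hbound : a ≤ κ * e) (hdecrease : σ * e ^ 2 ≤ a ^ 2 - b ^ 2) :
    (1 + σ⁻¹ * κ ^ 2) * b ^ 2 ≤ σ⁻¹ * κ ^ 2 * a ^ 2 := by
  have hba : b ^ 2 ≤ a ^ 2 := by nlinarith [sq_nonneg e]
  have hchain : a ^ 2 ≤ σ⁻¹ * κ ^ 2 * (a ^ 2 - b ^ 2) :=
    calc a ^ 2 ≤ (κ * e) ^ 2 := pow_le_pow_left₀ ha hbound 2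
      _ = σ⁻¹ * κ ^ 2 * (σ * e ^ 2) := by field_simp
      _ ≤ σ⁻¹ * κ ^ 2 * (a ^ 2 - b ^ 2) := by gcongr
  linarith

theorem distance_contraction_on_ball_general
    {X : Type*} [NormedAddCommGroup X]
    (T : X → X)
    (Z : Set X)
    (ρ : ℝ)
    (κ : ℝ)
    (hreg : ∀ x ∈ closedBall (0:X) ρ, infDist x Z ≤ κ * ‖x - T x‖)
    (σ : ℝ) (hσ : 0 < σ)
    (hav : ∀ x ∈ closedBall (0:X) ρ,
      σ * ‖x - T x‖ ^ 2 ≤ infDist x Z ^ 2 - infDist (T x) Z ^ 2) :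
    Real.sqrt (σ⁻¹ * κ ^ 2 / (1 + σ⁻¹ * κ ^ 2)) ∈ Set.Ico (0:ℝ) 1 ∧
    ∀ x ∈ closedBall (0:X) ρ,
      infDist (T x) Z ≤ Real.sqrt (σ⁻¹ * κ ^ 2 / (1 + σ⁻¹ * κ ^ 2)) * infDist x Z := by
  have hc : 0 ≤ σ⁻¹ * κ ^ 2 := by positivity
  refine ⟨Real.sqrt_div_one_add_mem_Ico hc, fun x hx => ?_⟩
  exact le_sqrt_div_one_add_mul_of_sq_le infDist_nonneg infDist_nonneg hc
    (sq_le_of_error_bound_of_sufficient_decrease hσ infDist_nonneg (hreg x hx) (hav x hx))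

/-- Key inequality (contraction of distances to the fixed point set) on a ball. -/
theorem distance_contraction_on_ball
    {X : Type*} [NormedAddCommGroup X] [InnerProductSpace ℝ X]
    (T : X → X)
    (havg : ∃ (lam : ℝ) (N : X → X), lam ∈ Set.Ico (0:ℝ) 1 ∧
      (∀ x y, ‖N x - N y‖ ≤ ‖x - y‖) ∧ ∀ x, T x = (1 - lam) • x + lam • N x)
    (Z : Set X) (hZ : Z = {x | T x = x}) (hZne : Z.Nonempty)
    (ρ : ℝ) (hρ : 0 < ρ)
    (κ : ℝ) (hκ : 0 ≤ κ)
    (hreg : ∀ x ∈ closedBall (0:X) ρ, infDist x Z ≤ κ * ‖x - T x‖)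
    (σ : ℝ) (hσ : 0 < σ)
    (hav : ∀ x ∈ closedBall (0:X) ρ,
      σ * ‖x - T x‖ ^ 2 ≤ infDist x Z ^ 2 - infDist (T x) Z ^ 2) :
    Real.sqrt (σ⁻¹ * κ ^ 2 / (1 + σ⁻¹ * κ ^ 2)) ∈ Set.Ico (0:ℝ) 1 ∧
    ∀ x ∈ closedBall (0:X) ρ,
      infDist (T x) Z ≤ Real.sqrt (σ⁻¹ * κ ^ 2 / (1 + σ⁻¹ * κ ^ 2)) * infDist x Z :=
  distance_contraction_on_ball_general T Z ρ κ hreg σ hσ hav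
end

section
/- Let (x_n) be a sequence in a real Hilbert space X that is Fejér monotone with respect to a nonempty closed convex set C (i.e., ‖x_{n+1} - c‖ ≤ ‖x_n - c‖ for all c ∈ C, n ∈ ℕ). Suppose there exists α ∈ [0,1) with d_C(x_{n+1}) ≤ α·d_C(x_n) for all n. Then (x_n) converges strongly to some point x̄ ∈ C, and ‖x_n - x̄‖ ≤ 2α^n d_C(x_0) for all n. -/
/-!
Fejér monotonicity gives `dist (x m) (x n) ≤ dist (x m) c + dist (x n) c ≤ 2 dist (x n) c` for
`n ≤ m` and every `c ∈ C`, hence `dist (x m) (x n) ≤ 2 d_C(x n)`. Once `d_C(x n) → 0` this makes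
the sequence Cauchy, its limit lies in the closed set `C`, and letting `m → ∞` gives
`dist (x n) x̄ ≤ 2 d_C(x n) ≤ 2 αⁿ d_C(x 0)`.
-/

open Metric Filter Topology

def FejerMonotone {α : Type*} [PseudoMetricSpace α] (C : Set α) (x : ℕ → α) : Prop :=
  ∀ c ∈ C, Antitone fun n => dist (x n) c

namespace FejerMonotone

variable {α : Type*} [PseudoMetricSpace α] {C : Set α} {x : ℕ → α}

theorem of_norm_sub_succ_le {E : Type*} [SeminormedAddCommGroup E] {C : Set E} {x : ℕ → E}
    (h : ∀ c ∈ C, ∀ n : ℕ, ‖x (n + 1) - c‖ ≤ ‖x n - c‖) : FejerMonotone C x := fun c hc =>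
  antitone_nat_of_succ_le fun n => by simpa only [dist_eq_norm] using h c hc n

theorem dist_le_two_mul_infDist (hx : FejerMonotone C x) (hC : C.Nonempty) {n m : ℕ}
    (hnm : n ≤ m) : dist (x n) (x m) ≤ 2 * infDist (x n) C := by
  rw [← div_le_iff₀' two_pos, le_infDist hC]
  intro c hc
  have hmc : dist (x m) c ≤ dist (x n) c := hx c hc hnm
  linarith [dist_triangle_right (x n) (x m) c]

theorem cauchySeq_of_tendsto_infDist (hx : FejerMonotone C x) (hC : C.Nonempty)
    (hd : Tendsto (fun n => infDist (x n) C) atTop (𝓝 0)) : CauchySeq x :=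
  cauchySeq_of_le_tendsto_0' _ (fun _ _ => hx.dist_le_two_mul_infDist hC)
    (by simpa using hd.const_mul 2)

theorem dist_le_two_mul_infDist_of_tendsto (hx : FejerMonotone C x) (hC : C.Nonempty) {a : α}
    (ha : Tendsto x atTop (𝓝 a)) (n : ℕ) : dist (x n) a ≤ 2 * infDist (x n) C :=
  le_of_tendsto (tendsto_const_nhds.dist ha)
    ((eventually_ge_atTop n).mono fun _ => hx.dist_le_two_mul_infDist hC)

theorem exists_tendsto_of_tendsto_infDist [CompleteSpace α] (hx : FejerMonotone C x)
    (hC : C.Nonempty) (hCc : IsClosed C)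
    (hd : Tendsto (fun n => infDist (x n) C) atTop (𝓝 0)) :
    ∃ a ∈ C, Tendsto x atTop (𝓝 a) ∧ ∀ n, dist (x n) a ≤ 2 * infDist (x n) C := by
  obtain ⟨a, ha⟩ := cauchySeq_tendsto_of_complete (hx.cauchySeq_of_tendsto_infDist hC hd)
  have hdist_a : Tendsto (fun n => infDist (x n) C) atTop (𝓝 (infDist a C)) :=
    (continuous_infDist_pt C).continuousAt.tendsto.comp ha
  have haC : a ∈ C := (hCc.mem_iff_infDist_zero hC).2 (tendsto_nhds_unique hdist_a hd)
  exact ⟨a, haC, ha, hx.dist_le_two_mul_infDist_of_tendsto hC ha⟩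

end FejerMonotone

theorem fejer_monotone_linear_convergence_general
    {X : Type*} [NormedAddCommGroup X] [CompleteSpace X]
    (C : Set X) (hCne : C.Nonempty) (hCc : IsClosed C)
    (x : ℕ → X)
    (hfejer : ∀ c ∈ C, ∀ n : ℕ, ‖x (n + 1) - c‖ ≤ ‖x n - c‖)
    (α : ℝ) (hα : α ∈ Set.Ico (0:ℝ) 1)
    (hd : ∀ n : ℕ, infDist (x (n + 1)) C ≤ α * infDist (x n) C) :
    ∃ xbar ∈ C, Tendsto x atTop (nhds xbar) ∧
      ∀ n : ℕ, ‖x n - xbar‖ ≤ 2 * α ^ n * infDist (x 0) C := by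
  obtain ⟨hα0, hα1⟩ := hα
  have hgeom (n : ℕ) : infDist (x n) C ≤ α ^ n * infDist (x 0) C :=
    le_geom (u := fun n => infDist (x n) C) hα0 n fun k _ => hd k
  have hd0 : Tendsto (fun n => infDist (x n) C) atTop (𝓝 0) := by
    refine squeeze_zero (fun _ => infDist_nonneg) hgeom ?_
    simpa using (tendsto_pow_atTop_nhds_zero_of_lt_one hα0 hα1).mul_const (infDist (x 0) C)
  obtain ⟨xbar, hxbarC, hlim, hbound⟩ :=
    (FejerMonotone.of_norm_sub_succ_le hfejer).exists_tendsto_of_tendsto_infDist hCne hCc hd0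
  refine ⟨xbar, hxbarC, hlim, fun n => ?_⟩
  calc ‖x n - xbar‖ = dist (x n) xbar := (dist_eq_norm _ _).symm
    _ ≤ 2 * infDist (x n) C := hbound n
    _ ≤ 2 * α ^ n * infDist (x 0) C := by linarith [hgeom n]

/-- Linear convergence of Fejér monotone sequences with geometric decrease of distance. -/
theorem fejer_monotone_linear_convergence
    {X : Type*} [NormedAddCommGroup X] [InnerProductSpace ℝ X] [CompleteSpace X]
    (C : Set X) (hCne : C.Nonempty) (hCc : IsClosed C) (hconv : Convex ℝ C)
    (x : ℕ → X)
    (hfejer : ∀ c ∈ C, ∀ n : ℕ, ‖x (n + 1) - c‖ ≤ ‖x n - c‖)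
    (α : ℝ) (hα : α ∈ Set.Ico (0:ℝ) 1)
    (hd : ∀ n : ℕ, infDist (x (n + 1)) C ≤ α * infDist (x n) C) :
    ∃ xbar ∈ C, Tendsto x atTop (nhds xbar) ∧
      ∀ n : ℕ, ‖x n - xbar‖ ≤ 2 * α ^ n * infDist (x 0) C :=
  fejer_monotone_linear_convergence_general C hCne hCc x hfejer α hα hd
end

section
/- Let T: X → X be averaged nonexpansive and boundedly linearly regular with Fix T ≠ ∅. Then for every x₀ ∈ X, the orbit (T^n x₀) converges strongly, with a linear rate, to some point x̄ ∈ Fix T. -/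
/-!
An averaged map `T = (1 - λ) Id + λ N` is strongly quasi-nonexpansive: for every fixed point `z`,
`‖T x - z‖² + c ‖x - T x‖² ≤ ‖x - z‖²` with `c = (1 - λ) / λ > 0`. Taking the infimum over `z`
gives `d(T x)² + c ‖x - T x‖² ≤ d(x)²` for `d = dist(·, Fix T)`, and bounded linear regularity
on the (bounded) orbit, `d(x) ≤ κ ‖x - T x‖`, turns this into `d(T x) ≤ √(1 - c / κ²) d(x)`.
Hence `d(Tⁿ x₀)`, and with it the step `‖Tⁿ x₀ - Tⁿ⁺¹ x₀‖ ≤ d(Tⁿ x₀) / √c`, decays geometrically,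
so the orbit is Cauchy and converges linearly; its limit is fixed by continuity of `T`.
-/

open Metric Filter Function Set Topology

section InnerProductSpace

variable {X : Type*} [NormedAddCommGroup X] [InnerProductSpace ℝ X]

theorem norm_one_sub_smul_add_smul_sq_add (lam : ℝ) (a b : X) :
    ‖(1 - lam) • a + lam • b‖ ^ 2 + lam * (1 - lam) * ‖a - b‖ ^ 2
      = (1 - lam) * ‖a‖ ^ 2 + lam * ‖b‖ ^ 2 := by
  simp only [← real_inner_self_eq_norm_sq, inner_add_left, inner_add_right, inner_sub_left,
    inner_sub_right, real_inner_smul_left, real_inner_smul_right, real_inner_comm b a]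
  ring

theorem norm_one_sub_smul_add_smul_sub_sq_add_le {lam : ℝ} (hlam : 0 ≤ lam) {x y z : X}
    (hy : ‖y - z‖ ≤ ‖x - z‖) :
    ‖(1 - lam) • x + lam • y - z‖ ^ 2 + lam * (1 - lam) * ‖x - y‖ ^ 2 ≤ ‖x - z‖ ^ 2 := by
  have hsplit : (1 - lam) • x + lam • y - z = (1 - lam) • (x - z) + lam • (y - z) := by module
  have hdiff : x - y = (x - z) - (y - z) := by abel
  rw [hsplit, hdiff, norm_one_sub_smul_add_smul_sq_add]
  nlinarith [pow_le_pow_left₀ (norm_nonneg _) hy 2]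

theorem exists_pos_dist_sq_add_le_of_averaged {N T : X → X} {lam : ℝ} (hlam : lam ∈ Ico 0 1)
    (hN : ∀ x y, ‖N x - N y‖ ≤ ‖x - y‖) (hT : ∀ x, T x = (1 - lam) • x + lam • N x) :
    ∃ c > 0, ∀ z ∈ fixedPoints T, ∀ x, dist (T x) z ^ 2 + c * dist x (T x) ^ 2 ≤ dist x z ^ 2 := by
  rcases hlam.1.eq_or_lt with rfl | hpos
  · refine ⟨1, one_pos, fun z _ x => ?_⟩
    simp [hT]
  refine ⟨(1 - lam) / lam, div_pos (by linarith [hlam.2]) hpos, fun z hz x => ?_⟩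
  have hNz : N z = z := by
    have : lam • (N z - z) = 0 := by
      rw [← sub_eq_zero.2 (hz : T z = z), hT z]
      module
    exact sub_eq_zero.1 ((smul_eq_zero.1 this).resolve_left hpos.ne')
  have hdisp : ‖x - T x‖ = lam * ‖x - N x‖ := by
    rw [hT x, show x - ((1 - lam) • x + lam • N x) = lam • (x - N x) by module, norm_smul,
      Real.norm_of_nonneg hpos.le]
  have hc : (1 - lam) / lam * ‖x - T x‖ ^ 2 = lam * (1 - lam) * ‖x - N x‖ ^ 2 := by
    rw [hdisp]
    field_simp
  rw [dist_eq_norm, dist_eq_norm, dist_eq_norm, hc, hT x]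
  exact norm_one_sub_smul_add_smul_sub_sq_add_le hpos.le (by simpa [hNz] using hN x z)

end InnerProductSpace

section MetricSpace

variable {X : Type*} [MetricSpace X] {T : X → X} {c κ : ℝ}

theorem le_infDist_sq {s : Set X} {x : X} {a : ℝ} (hs : s.Nonempty)
    (h : ∀ y ∈ s, a ≤ dist x y ^ 2) : a ≤ infDist x s ^ 2 :=
  (Real.sqrt_le_left infDist_nonneg).1 <|
    (le_infDist hs).2 fun y hy => (Real.sqrt_le_left dist_nonneg).2 (h y hy)

variable (hsq : ∀ z ∈ fixedPoints T, ∀ x, dist (T x) z ^ 2 + c * dist x (T x) ^ 2 ≤ dist x z ^ 2)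
include hsq

theorem dist_iterate_le (hc : 0 ≤ c) {z : X} (hz : z ∈ fixedPoints T) (x : X) (n : ℕ) :
    dist (T^[n] x) z ≤ dist x z := by
  induction n with
  | zero => rfl
  | succ n ih =>
    rw [iterate_succ_apply']
    refine le_trans ?_ ih
    refine (pow_le_pow_iff_left₀ dist_nonneg dist_nonneg two_ne_zero).1 ?_
    nlinarith [hsq z hz (T^[n] x), sq_nonneg (dist (T^[n] x) (T (T^[n] x)))]

variable (hF : (fixedPoints T).Nonempty)
include hF

theorem infDist_fixedPoints_apply_sq_add_le (x : X) :
    infDist (T x) (fixedPoints T) ^ 2 + c * dist x (T x) ^ 2 ≤ infDist x (fixedPoints T) ^ 2 :=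
  le_infDist_sq hF fun z hz =>
    (add_le_add_left (pow_le_pow_left₀ infDist_nonneg (infDist_le_dist_of_mem hz) 2) _).trans
      (hsq z hz x)

theorem infDist_fixedPoints_apply_le (hc : 0 < c) (hκ : 0 < κ) {x : X}
    (hx : infDist x (fixedPoints T) ≤ κ * dist x (T x)) :
    infDist (T x) (fixedPoints T) ≤ √(1 - c / κ ^ 2) * infDist x (fixedPoints T) := by
  set d := infDist x (fixedPoints T)
  have hd : d ^ 2 ≤ κ ^ 2 * dist x (T x) ^ 2 := by
    rw [← mul_pow]
    exact pow_le_pow_left₀ infDist_nonneg hx 2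
  have hcontract : infDist (T x) (fixedPoints T) ^ 2 ≤ (1 - c / κ ^ 2) * d ^ 2 := by
    have := infDist_fixedPoints_apply_sq_add_le hsq hF x
    have : c / κ ^ 2 * d ^ 2 ≤ c * dist x (T x) ^ 2 := by
      calc c / κ ^ 2 * d ^ 2 ≤ c / κ ^ 2 * (κ ^ 2 * dist x (T x) ^ 2) := by gcongr
        _ = c * dist x (T x) ^ 2 := by field_simp
    linarith
  calc infDist (T x) (fixedPoints T) ≤ √((1 - c / κ ^ 2) * d ^ 2) := Real.le_sqrt_of_sq_le hcontract
    _ = √(1 - c / κ ^ 2) * d := by rw [Real.sqrt_mul' _ (sq_nonneg d), Real.sqrt_sq infDist_nonneg]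

theorem dist_apply_le_infDist_fixedPoints_div (hc : 0 < c) (x : X) :
    dist x (T x) ≤ infDist x (fixedPoints T) / √c := by
  rw [le_div_iff₀ (Real.sqrt_pos.2 hc)]
  refine (pow_le_pow_iff_left₀ (by positivity) infDist_nonneg two_ne_zero).1 ?_
  rw [mul_pow, Real.sq_sqrt hc.le]
  nlinarith [infDist_fixedPoints_apply_sq_add_le hsq hF x,
    sq_nonneg (infDist (T x) (fixedPoints T))]

theorem exists_tendsto_iterate_linear_rate [CompleteSpace X] (hT : Continuous T) (hc : 0 < c)
    (hκ : 0 < κ) (x₀ : X)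
    (hreg : ∀ n, infDist (T^[n] x₀) (fixedPoints T) ≤ κ * dist (T^[n] x₀) (T (T^[n] x₀))) :
    ∃ xbar ∈ fixedPoints T, Tendsto (fun n => T^[n] x₀) atTop (𝓝 xbar) ∧
      ∃ M ≥ (0 : ℝ), ∃ α ∈ Ico (0 : ℝ) 1, ∀ n : ℕ, dist (T^[n] x₀) xbar ≤ M * α ^ n := by
  set α := √(1 - c / κ ^ 2)
  have hα : α ∈ Ico (0 : ℝ) 1 := by
    have : 0 < c / κ ^ 2 := by positivity
    exact ⟨Real.sqrt_nonneg _, (Real.sqrt_lt' one_pos).2 (by linarith)⟩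
  have hdecay : ∀ n, infDist (T^[n] x₀) (fixedPoints T) ≤ infDist x₀ (fixedPoints T) * α ^ n := by
    intro n
    induction n with
    | zero => simp
    | succ n ih =>
      calc infDist (T^[n + 1] x₀) (fixedPoints T)
          ≤ α * infDist (T^[n] x₀) (fixedPoints T) := by
            rw [iterate_succ_apply']
            exact infDist_fixedPoints_apply_le hsq hF hc hκ (hreg n)
        _ ≤ α * (infDist x₀ (fixedPoints T) * α ^ n) := mul_le_mul_of_nonneg_left ih hα.1
        _ = infDist x₀ (fixedPoints T) * α ^ (n + 1) := by ring
  set C := infDist x₀ (fixedPoints T) / √c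
  have hstep : ∀ n, dist (T^[n] x₀) (T^[n + 1] x₀) ≤ C * α ^ n := fun n => by
    rw [iterate_succ_apply']
    calc dist (T^[n] x₀) (T (T^[n] x₀)) ≤ infDist (T^[n] x₀) (fixedPoints T) / √c :=
          dist_apply_le_infDist_fixedPoints_div hsq hF hc _
      _ ≤ infDist x₀ (fixedPoints T) * α ^ n / √c := by gcongr; exact hdecay n
      _ = C * α ^ n := by ring
  obtain ⟨xbar, hlim⟩ := cauchySeq_tendsto_of_complete (cauchySeq_of_le_geometric α C hα.2 hstep)
  have hC : 0 ≤ C := div_nonneg infDist_nonneg (Real.sqrt_nonneg c)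
  refine ⟨xbar, isFixedPt_of_tendsto_iterate hlim hT.continuousAt, hlim, C / (1 - α),
    div_nonneg hC (sub_nonneg.2 hα.2.le), α, hα, fun n => ?_⟩
  calc dist (T^[n] x₀) xbar ≤ C * α ^ n / (1 - α) :=
        dist_le_of_le_geometric_of_tendsto α C hα.2 hstep hlim n
    _ = C / (1 - α) * α ^ n := by ring

end MetricSpace

/-- Linear convergence of orbits of averaged, boundedly linearly regular operators. -/
theorem averaged_blr_orbit_linear_convergence
    {X : Type*} [NormedAddCommGroup X] [InnerProductSpace ℝ X] [CompleteSpace X]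
    (T : X → X)
    (havg : ∃ (lam : ℝ) (N : X → X), lam ∈ Set.Ico (0:ℝ) 1 ∧
      (∀ x y, ‖N x - N y‖ ≤ ‖x - y‖) ∧ ∀ x, T x = (1 - lam) • x + lam • N x)
    (hblr : ∀ ρ > (0:ℝ), ∃ κ ≥ (0:ℝ), ∀ x : X, ‖x‖ ≤ ρ →
      infDist x {z | T z = z} ≤ κ * ‖x - T x‖)
    (hfix : {z | T z = z}.Nonempty) :
    ∀ x₀ : X, ∃ xbar, T xbar = xbar ∧
      Tendsto (fun n => T^[n] x₀) atTop (nhds xbar) ∧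
      ∃ M ≥ (0:ℝ), ∃ α ∈ Set.Ico (0:ℝ) 1, ∀ n : ℕ, ‖T^[n] x₀ - xbar‖ ≤ M * α ^ n := by
  intro x₀
  obtain ⟨lam, N, hlam, hN, hT⟩ := havg
  obtain ⟨c, hc, hsq⟩ := exists_pos_dist_sq_add_le_of_averaged hlam hN hT
  have hTcont : Continuous T := by
    have hNcont : Continuous N :=
      (LipschitzWith.of_dist_le_mul (K := 1) fun x y => by
        simpa [dist_eq_norm] using hN x y).continuous
    rw [show T = fun x => (1 - lam) • x + lam • N x from funext hT]
    fun_prop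
  obtain ⟨z, hz⟩ := hfix
  set ρ := dist x₀ z + ‖z‖ + 1
  have horbit : ∀ n, ‖T^[n] x₀‖ ≤ ρ := fun n => by
    have := dist_iterate_le hsq hc.le hz x₀ n
    have := norm_sub_norm_le (T^[n] x₀) z
    rw [dist_eq_norm] at *
    linarith
  obtain ⟨κ, hκ, hreg⟩ := hblr ρ (by positivity)
  obtain ⟨xbar, hxbar, hlim, M, hM, α, hα, hrate⟩ :=
    exists_tendsto_iterate_linear_rate hsq ⟨z, hz⟩ hTcont hc (by linarith : (0 : ℝ) < κ + 1) x₀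
      fun n => (hreg _ (horbit n)).trans (by rw [dist_eq_norm]; gcongr; linarith)
  exact ⟨xbar, hxbar, hlim, M, hM, α, hα, fun n => by simpa [dist_eq_norm] using hrate n⟩
end

section
/- Let A, B be nonempty closed convex subsets of a Euclidean space X with ri A ∩ ri B ≠ ∅, let c ∈ A ∩ B, and set T = P_B R_A + Id - P_A (the Douglas–Rachford operator, R_A = 2P_A - Id). Then there exist δ > 0 and θ < 1 such that for all x ∈ aff(A ∪ B) with ‖x - c‖ ≤ δ: ⟨P_A x - R_A x, P_B R_A x - R_A x⟩ ≤ θ·d_A(x)·d_B(R_A x), and consequently ‖x - Tx‖² ≥ ((1-θ)/5)·max{d_A(x)², d_B(x)²}. -/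
/-!
Write `v = x - P_A x` and `w = P_B (R_A x) - R_A x`. Then `x - T x = v - w`, `‖v‖ = d_A(x)`,
`‖w‖ = d_B(R_A x)`, `v` is a normal vector to `A` at `P_A x` lying in `span (B - A)`, and `-w`
is a normal vector to `B` at `P_B (R_A x)`; both base points tend to `c` as `x → c`. If the
cosine of the angle between `v` and `w` could approach `1` near `c`, compactness of the unit
sphere would give a unit vector `u ∈ span (B - A)` with `u ∈ N_A(c)` and `-u ∈ N_B(c)`,
contradicting transversality. The second estimate follows from
`‖v - w‖² ≥ (1 - θ)(‖v‖² + ‖w‖²)` and `d_B(x) ≤ ‖w‖ + 2‖v‖`.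
-/

open Metric Filter Topology RealInnerProductSpace

section IntrinsicInterior

variable {E : Type*} [NormedAddCommGroup E] [NormedSpace ℝ E] {A : Set E} {a z : E}

lemma exists_one_lt_lineMap_mem_of_mem_intrinsicInterior (hz : z ∈ intrinsicInterior ℝ A)
    (ha : a ∈ affineSpan ℝ A) : ∃ s > (1:ℝ), AffineMap.lineMap a z s ∈ A := by
  obtain ⟨z', hz', rfl⟩ := hz
  have hz₀ : (z' : E) ∈ affineSpan ℝ A := z'.2
  let f : ℝ → affineSpan ℝ A := fun s =>
    ⟨AffineMap.lineMap a z' s, AffineMap.lineMap_mem _ ha hz₀⟩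
  have hf : Continuous f := by fun_prop
  have h1 : f 1 = z' := by ext; simp [f]
  have hnhds : ∀ᶠ s in 𝓝 (1:ℝ), f s ∈ interior ((↑) ⁻¹' A : Set (affineSpan ℝ A)) :=
    hf.continuousAt.preimage_mem_nhds (h1 ▸ isOpen_interior.mem_nhds hz')
  obtain ⟨s, hs, hs1⟩ := ((eventually_nhdsWithin_of_eventually_nhds hnhds).and
    (self_mem_nhdsWithin (s := Set.Ioi 1))).exists
  exact ⟨s, hs1, interior_subset (s := ((↑) ⁻¹' A : Set (affineSpan ℝ A))) hs⟩

lemma IsMaxOn.eq_of_mem_intrinsicInterior {f : E →ᵃ[ℝ] ℝ} (hf : IsMaxOn f A z)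
    (hz : z ∈ intrinsicInterior ℝ A) : ∀ a ∈ A, f a = f z := by
  intro a ha
  obtain ⟨s, hs, hmem⟩ := exists_one_lt_lineMap_mem_of_mem_intrinsicInterior hz
    (subset_affineSpan ℝ A ha)
  have hle : f (AffineMap.lineMap a z s) ≤ f z := hf hmem
  rw [f.apply_lineMap, AffineMap.lineMap_apply_ring'] at hle
  nlinarith [show f a ≤ f z from hf ha]

end IntrinsicInterior

section NormalCone

variable {X : Type*} [NormedAddCommGroup X] [InnerProductSpace ℝ X]

/-- The normal cone `N_A(p)`; unlike the usual convention it is not `∅` when `p ∉ A`. -/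
def normalCone (A : Set X) (p : X) : Set X := {v | ∀ a ∈ A, ⟪v, a - p⟫ ≤ 0}

variable {A B : Set X} {c p u v x : X}

lemma smul_mem_normalCone (hv : v ∈ normalCone A p) {t : ℝ} (ht : 0 ≤ t) :
    t • v ∈ normalCone A p := fun a ha => by
  rw [real_inner_smul_left]
  exact mul_nonpos_of_nonneg_of_nonpos ht (hv a ha)

lemma sub_mem_normalCone_of_norm_sub_eq_infDist (hA : Convex ℝ A) (hp : p ∈ A)
    (h : ‖x - p‖ = infDist x A) : x - p ∈ normalCone A p := by
  refine (norm_eq_iInf_iff_real_inner_le_zero hA hp).1 ?_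
  rw [h, infDist_eq_iInf]
  simp only [dist_eq_norm]

lemma mem_normalCone_of_tendsto {ι : Type*} {l : Filter ι} [l.NeBot] {p v : ι → X} {v₀ : X}
    (hp : Tendsto p l (𝓝 c)) (hv : Tendsto v l (𝓝 v₀)) (h : ∀ i, v i ∈ normalCone A (p i)) :
    v₀ ∈ normalCone A c := fun a ha =>
  le_of_tendsto (hv.inner (tendsto_const_nhds.sub hp)) (Eventually.of_forall fun i => h i a ha)

lemma eq_zero_of_inner_eq_of_mem_direction {S : Set X} {r : ℝ} (h : ∀ p ∈ S, ⟪u, p⟫ = r)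
    (hu : u ∈ (affineSpan ℝ S).direction) : u = 0 := by
  have hdir : (affineSpan ℝ S).direction ≤ (ℝ ∙ u)ᗮ := by
    rw [direction_affineSpan, vectorSpan_def, Submodule.span_le]
    rintro _ ⟨p, hp, q, hq, rfl⟩
    simp [Submodule.mem_orthogonal_singleton_iff_inner_right, inner_sub_right, h p hp, h q hq]
  exact inner_self_eq_zero.1 (Submodule.mem_orthogonal_singleton_iff_inner_right.1 (hdir hu))

lemma eq_zero_of_mem_normalCone_of_neg_mem_normalCone
    (htrans : (intrinsicInterior ℝ A ∩ intrinsicInterior ℝ B).Nonempty)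
    (hA : u ∈ normalCone A c) (hB : -u ∈ normalCone B c)
    (hu : u ∈ (affineSpan ℝ (A ∪ B)).direction) : u = 0 := by
  obtain ⟨z, hzA, hzB⟩ := htrans
  let f : X →ᵃ[ℝ] ℝ := (innerₛₗ ℝ u).toAffineMap
  have hfA : ∀ a ∈ A, f a ≤ f c := fun a ha => by
    simpa [f, inner_sub_right] using hA a ha
  have hfB : ∀ b ∈ B, f c ≤ f b := fun b hb => by
    simpa [f, inner_sub_right] using hB b hb
  have hfz : f z = f c :=
    le_antisymm (hfA z (intrinsicInterior_subset hzA)) (hfB z (intrinsicInterior_subset hzB))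
  have hmaxA : IsMaxOn f A z := fun a ha => hfz ▸ hfA a ha
  have hmaxB : IsMaxOn (-f) B z := fun b hb => by
    simpa [hfz] using hfB b hb
  refine eq_zero_of_inner_eq_of_mem_direction (r := f z) (fun p hp => ?_) hu
  rcases hp with hp | hp
  · exact hmaxA.eq_of_mem_intrinsicInterior hzA p hp
  · exact neg_inj.1 (hmaxB.eq_of_mem_intrinsicInterior hzB p hp)

end NormalCone

section Angle

variable {X : Type*} [NormedAddCommGroup X] [InnerProductSpace ℝ X] [FiniteDimensional ℝ X]
  {A B : Set X}

lemma exists_inner_le_of_norm_eq_one_of_transversal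
    (htrans : (intrinsicInterior ℝ A ∩ intrinsicInterior ℝ B).Nonempty) (c : X) :
    ∃ θ ∈ Set.Ico (0:ℝ) 1, ∃ δ > (0:ℝ), ∀ p q v w : X, ‖p - c‖ ≤ δ → ‖q - c‖ ≤ δ →
      v ∈ (affineSpan ℝ (A ∪ B)).direction → v ∈ normalCone A p → -w ∈ normalCone B q →
      ‖v‖ = 1 → ‖w‖ = 1 → ⟪v, w⟫ ≤ θ := by
  by_contra! h
  have hθ (n : ℕ) : 1 - 1 / ((n : ℝ) + 1) ∈ Set.Ico (0:ℝ) 1 :=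
    ⟨sub_nonneg.2 (by simpa using Nat.one_div_le_one_div (α := ℝ) n.zero_le),
      sub_lt_self _ Nat.one_div_pos_of_nat⟩
  choose p q v w hp hq hV hA hB hv hw hvw using
    fun n : ℕ => h _ (hθ n) (1 / ((n : ℝ) + 1)) Nat.one_div_pos_of_nat
  obtain ⟨⟨v₀, w₀⟩, ⟨hv₀, hw₀⟩, φ, hφ, hlim⟩ :=
    ((isCompact_sphere (0:X) 1).prod (isCompact_sphere (0:X) 1)).tendsto_subseq
      (x := fun n => (v n, w n)) fun n => ⟨by simpa using hv n, by simpa using hw n⟩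
  rw [mem_sphere_zero_iff_norm] at hv₀ hw₀
  have hvlim : Tendsto (v ∘ φ) atTop (𝓝 v₀) := hlim.fst_nhds
  have hwlim : Tendsto (w ∘ φ) atTop (𝓝 w₀) := hlim.snd_nhds
  have hε : Tendsto (fun n => 1 / ((φ n : ℝ) + 1)) atTop (𝓝 0) :=
    tendsto_one_div_add_atTop_nhds_zero_nat.comp hφ.tendsto_atTop
  have hpc : Tendsto (p ∘ φ) atTop (𝓝 c) := tendsto_iff_norm_sub_tendsto_zero.2 <|
    squeeze_zero (fun _ => norm_nonneg _) (fun n => hp (φ n)) hε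
  have hqc : Tendsto (q ∘ φ) atTop (𝓝 c) := tendsto_iff_norm_sub_tendsto_zero.2 <|
    squeeze_zero (fun _ => norm_nonneg _) (fun n => hq (φ n)) hε
  have hv₀w₀ : v₀ = w₀ := by
    have hle : 1 ≤ ⟪v₀, w₀⟫ := le_of_tendsto_of_tendsto' (by simpa using hε.const_sub 1)
      (hvlim.inner hwlim) fun n => (hvw (φ n)).le
    have hge : ⟪v₀, w₀⟫ ≤ 1 := by simpa [hv₀, hw₀] using real_inner_le_norm v₀ w₀
    exact (inner_eq_one_iff_of_norm_eq_one hv₀ hw₀).1 (le_antisymm hge hle)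
  have hA₀ : v₀ ∈ normalCone A c := mem_normalCone_of_tendsto hpc hvlim fun n => hA (φ n)
  have hB₀ : -v₀ ∈ normalCone B c :=
    hv₀w₀ ▸ mem_normalCone_of_tendsto hqc hwlim.neg fun n => hB (φ n)
  have hV₀ : v₀ ∈ (affineSpan ℝ (A ∪ B)).direction :=
    (Submodule.closed_of_finiteDimensional _).mem_of_tendsto hvlim
      (Eventually.of_forall fun n => hV (φ n))
  simp [eq_zero_of_mem_normalCone_of_neg_mem_normalCone htrans hA₀ hB₀ hV₀] at hv₀

lemma exists_inner_le_mul_norm_of_transversal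
    (htrans : (intrinsicInterior ℝ A ∩ intrinsicInterior ℝ B).Nonempty) (c : X) :
    ∃ θ ∈ Set.Ico (0:ℝ) 1, ∃ δ > (0:ℝ), ∀ p q v w : X, ‖p - c‖ ≤ δ → ‖q - c‖ ≤ δ →
      v ∈ (affineSpan ℝ (A ∪ B)).direction → v ∈ normalCone A p → -w ∈ normalCone B q →
      ⟪v, w⟫ ≤ θ * (‖v‖ * ‖w‖) := by
  obtain ⟨θ, hθ, δ, hδ, hunit⟩ := exists_inner_le_of_norm_eq_one_of_transversal htrans c
  refine ⟨θ, hθ, δ, hδ, fun p q v w hp hq hV hA hB => ?_⟩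
  rcases eq_or_ne v 0 with rfl | hv
  · simp
  rcases eq_or_ne w 0 with rfl | hw
  · simp
  have hvw := hunit p q (‖v‖⁻¹ • v) (‖w‖⁻¹ • w) hp hq (Submodule.smul_mem _ _ hV)
    (smul_mem_normalCone hA (by positivity))
    (by simpa only [smul_neg] using smul_mem_normalCone hB (t := ‖w‖⁻¹) (by positivity))
    (norm_smul_inv_norm hv) (norm_smul_inv_norm hw)
  rw [real_inner_smul_left, real_inner_smul_right, ← mul_assoc, ← mul_inv, mul_comm,
    ← div_eq_mul_inv, div_le_iff₀ (by positivity)] at hvw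
  linarith

end Angle

section Reflection

variable {X : Type*} [NormedAddCommGroup X] {A : Set X} {c p x : X}

lemma norm_sub_le_two_mul_of_norm_sub_eq_infDist (hc : c ∈ A) (h : ‖x - p‖ = infDist x A) :
    ‖p - c‖ ≤ 2 * ‖x - c‖ := by
  have hpx : ‖p - x‖ ≤ ‖x - c‖ := by
    rw [norm_sub_rev, h, ← dist_eq_norm]
    exact infDist_le_dist_of_mem hc
  linarith [norm_sub_le_norm_sub_add_norm_sub p x c]

variable [NormedSpace ℝ X]

lemma norm_two_smul_sub_sub_le_of_norm_sub_eq_infDist (hc : c ∈ A) (h : ‖x - p‖ = infDist x A) :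
    ‖(2:ℝ) • p - x - c‖ ≤ 5 * ‖x - c‖ := by
  rw [show (2:ℝ) • p - x - c = (2:ℝ) • (p - c) - (x - c) by module]
  refine (norm_sub_le _ _).trans ?_
  rw [norm_smul, Real.norm_two]
  linarith [norm_sub_le_two_mul_of_norm_sub_eq_infDist hc h]

lemma infDist_le_infDist_two_smul_sub_add (B : Set X) (p x : X) :
    infDist x B ≤ infDist ((2:ℝ) • p - x) B + 2 * ‖x - p‖ := by
  refine (infDist_le_infDist_add_dist (y := (2:ℝ) • p - x)).trans_eq ?_
  rw [dist_eq_norm, show x - ((2:ℝ) • p - x) = (2:ℝ) • (x - p) by module, norm_smul,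
    Real.norm_two]

end Reflection

lemma one_sub_mul_sq_add_sq_le {θ a b i : ℝ} (hθ : 0 ≤ θ) (hi : i ≤ θ * a * b) :
    (1 - θ) * (a ^ 2 + b ^ 2) ≤ a ^ 2 - 2 * i + b ^ 2 := by
  nlinarith [mul_nonneg hθ (sq_nonneg (a - b))]

/-- The constant `5` is Cauchy–Schwarz: `(b + 2a)² ≤ (1 + 2²)(a² + b²)`. -/
lemma max_sq_le_five_mul_sq_add_sq {a b d : ℝ} (hd : 0 ≤ d) (hdab : d ≤ b + 2 * a) :
    max (a ^ 2) (d ^ 2) ≤ 5 * (a ^ 2 + b ^ 2) :=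
  max_le (by nlinarith [sq_nonneg b]) (by nlinarith [sq_nonneg (a - 2 * b)])

theorem dr_local_angle_estimate_general
    {X : Type*} [NormedAddCommGroup X] [InnerProductSpace ℝ X] [FiniteDimensional ℝ X]
    (A B : Set X)
    (hAconv : Convex ℝ A) (hBconv : Convex ℝ B)
    (htrans : (intrinsicInterior ℝ A ∩ intrinsicInterior ℝ B).Nonempty)
    (c : X) (hc : c ∈ A ∩ B)
    (PA PB : X → X)
    (hPA : ∀ x, PA x ∈ A ∧ ‖x - PA x‖ = infDist x A)
    (hPB : ∀ x, PB x ∈ B ∧ ‖x - PB x‖ = infDist x B)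
    (RA : X → X) (hRA : ∀ x, RA x = (2:ℝ) • PA x - x)
    (T : X → X) (hT : ∀ x, T x = PB (RA x) + x - PA x) :
    ∃ δ > (0:ℝ), ∃ θ < (1:ℝ),
      ∀ x ∈ (affineSpan ℝ (A ∪ B) : Set X), ‖x - c‖ ≤ δ →
        (inner ℝ (PA x - RA x) (PB (RA x) - RA x) : ℝ) ≤
          θ * infDist x A * infDist (RA x) B ∧
        ‖x - T x‖ ^ 2 ≥ (1 - θ) / 5 * max (infDist x A ^ 2) (infDist x B ^ 2) := by
  obtain ⟨θ, ⟨hθ0, hθ1⟩, δ, hδ, hangle⟩ := exists_inner_le_mul_norm_of_transversal htrans c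
  refine ⟨δ / 10, by positivity, θ, hθ1, fun x hx hxc => ?_⟩
  obtain ⟨hpA, hdA⟩ := hPA x
  obtain ⟨hqB, hdB⟩ := hPB (RA x)
  have hPAc := norm_sub_le_two_mul_of_norm_sub_eq_infDist hc.1 hdA
  have hRAc := hRA x ▸ norm_two_smul_sub_sub_le_of_norm_sub_eq_infDist hc.1 hdA
  have hPBc := norm_sub_le_two_mul_of_norm_sub_eq_infDist hc.2 hdB
  have hangle_x : ⟪x - PA x, PB (RA x) - RA x⟫ ≤ θ * infDist x A * infDist (RA x) B := by
    rw [← hdA, ← hdB, norm_sub_rev (RA x), mul_assoc]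
    refine hangle (PA x) (PB (RA x)) _ _ (by linarith) (by linarith)
      (AffineSubspace.vsub_mem_direction hx (subset_affineSpan ℝ _ (Or.inl hpA)))
      (sub_mem_normalCone_of_norm_sub_eq_infDist hAconv hpA hdA) ?_
    simpa only [neg_sub] using sub_mem_normalCone_of_norm_sub_eq_infDist hBconv hqB hdB
  have hxT : ‖x - T x‖ ^ 2 = ‖x - PA x‖ ^ 2 - 2 * ⟪x - PA x, PB (RA x) - RA x⟫
      + ‖PB (RA x) - RA x‖ ^ 2 := by
    rw [hT, hRA, ← norm_sub_sq_real]
    congr 2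
    module
  refine ⟨by rwa [show PA x - RA x = x - PA x by rw [hRA]; module], ?_⟩
  rw [ge_iff_le, hxT, hdA, norm_sub_rev (PB (RA x)), hdB]
  calc (1 - θ) / 5 * max (infDist x A ^ 2) (infDist x B ^ 2)
      ≤ (1 - θ) / 5 * (5 * (infDist x A ^ 2 + infDist (RA x) B ^ 2)) := by
        refine mul_le_mul_of_nonneg_left (max_sq_le_five_mul_sq_add_sq infDist_nonneg ?_)
          (by linarith)
        simpa only [hRA, hdA] using infDist_le_infDist_two_smul_sub_add B (PA x) x
    _ = (1 - θ) * (infDist x A ^ 2 + infDist (RA x) B ^ 2) := by ring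
    _ ≤ _ := one_sub_mul_sq_add_sq_le hθ0 hangle_x

/-- Local angle estimate for the Douglas–Rachford operator of two transversal sets. -/
theorem dr_local_angle_estimate
    {X : Type*} [NormedAddCommGroup X] [InnerProductSpace ℝ X] [FiniteDimensional ℝ X]
    (A B : Set X) (hAne : A.Nonempty) (hBne : B.Nonempty)
    (hAc : IsClosed A) (hBc : IsClosed B) (hAconv : Convex ℝ A) (hBconv : Convex ℝ B)
    (htrans : (intrinsicInterior ℝ A ∩ intrinsicInterior ℝ B).Nonempty)
    (c : X) (hc : c ∈ A ∩ B)
    (PA PB : X → X)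
    (hPA : ∀ x, PA x ∈ A ∧ ‖x - PA x‖ = infDist x A)
    (hPB : ∀ x, PB x ∈ B ∧ ‖x - PB x‖ = infDist x B)
    (RA : X → X) (hRA : ∀ x, RA x = (2:ℝ) • PA x - x)
    (T : X → X) (hT : ∀ x, T x = PB (RA x) + x - PA x) :
    ∃ δ > (0:ℝ), ∃ θ < (1:ℝ),
      ∀ x ∈ (affineSpan ℝ (A ∪ B) : Set X), ‖x - c‖ ≤ δ →
        (inner ℝ (PA x - RA x) (PB (RA x) - RA x) : ℝ) ≤
          θ * infDist x A * infDist (RA x) B ∧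
        ‖x - T x‖ ^ 2 ≥ (1 - θ) / 5 * max (infDist x A ^ 2) (infDist x B ^ 2) :=
  dr_local_angle_estimate_general A B hAconv hBconv htrans c hc PA PB hPA hPB RA hRA T hT
end

section
/- Set I = {1,…,m} and let (T_i)_{i∈I} be averaged nonexpansive self-maps of a real Hilbert space X with fixed point sets Z_i, each T_i boundedly regular, Z = ∩_i Z_i ≠ ∅, and (Z_i)_{i∈I} boundedly regular (for every bounded sequence (x_n), max_i d_{Z_i}(x_n) → 0 implies d_Z(x_n) → 0). Then for every x₀ ∈ X, the sequence ((T_m⋯T_2T_1)^n x₀) converges strongly to some point in Z. -/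
/-!
Each averaged map `(1 - t) • id + t • N` is nonexpansive and `(1 - t)`-strongly attracting
towards its fixed points. Along the orbit `xₙ` of the cyclic composition, `‖xₙ - z‖²` is
therefore nonincreasing for every `z ∈ Z`, so its one-step decrease tends to zero; this
decrease is the sum of the decreases caused by the individual factors, each of which bounds
the squared residual of that factor at the current intermediate point. This yields
`xₙ - Tᵢ xₙ → 0` for each `i`, so bounded regularity of the `Tᵢ` and of the family `(Zᵢ)`
gives `d(xₙ, Z) → 0`; a Fejér monotone sequence whose distance to a closed set tends to zero
converges to a point of that set.
-/

open Metric Filter Topology Function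

theorem norm_one_sub_smul_add_smul_sq {X : Type*} [SeminormedAddCommGroup X]
    [InnerProductSpace ℝ X] (t : ℝ) (a b : X) :
    ‖(1 - t) • a + t • b‖ ^ 2 = (1 - t) * ‖a‖ ^ 2 + t * ‖b‖ ^ 2 - t * (1 - t) * ‖a - b‖ ^ 2 := by
  simp only [← real_inner_self_eq_norm_sq, inner_add_left, inner_add_right, inner_smul_left,
    inner_smul_right, inner_sub_left, inner_sub_right, starRingEnd_apply, star_trivial,
    real_inner_comm b a]
  ring

theorem LipschitzWith.averaged {E : Type*} [SeminormedAddCommGroup E] [NormedSpace ℝ E]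
    {N : E → E} (hN : LipschitzWith 1 N) {t : ℝ} (ht : t ∈ Set.Icc 0 1) :
    LipschitzWith 1 fun x => (1 - t) • x + t • N x := by
  refine LipschitzWith.of_dist_le_mul fun x y => ?_
  have hsplit : (1 - t) • x + t • N x - ((1 - t) • y + t • N y)
      = (1 - t) • (x - y) + t • (N x - N y) := by module
  have hNxy : ‖N x - N y‖ ≤ ‖x - y‖ := by simpa using hN.norm_sub_le x y
  rw [dist_eq_norm, dist_eq_norm, hsplit, NNReal.coe_one, one_mul]
  calc ‖(1 - t) • (x - y) + t • (N x - N y)‖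
      ≤ (1 - t) * ‖x - y‖ + t * ‖N x - N y‖ := by
        refine (norm_add_le _ _).trans_eq ?_
        rw [norm_smul, norm_smul, Real.norm_of_nonneg (sub_nonneg.2 ht.2),
          Real.norm_of_nonneg ht.1]
    _ ≤ ‖x - y‖ := by nlinarith [ht.1]

section StronglyAttracting

variable {X : Type*} [SeminormedAddCommGroup X]

/-- `κ`-strong attraction towards every point of `C`, in the sense of Bauschke–Borwein. -/
def IsStronglyAttracting (κ : ℝ) (C : Set X) (T : X → X) : Prop :=
  ∀ x, ∀ z ∈ C, ‖T x - z‖ ^ 2 + κ * ‖x - T x‖ ^ 2 ≤ ‖x - z‖ ^ 2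

variable {κ : ℝ} {C D : Set X} {T : X → X} {z : X}

theorem IsStronglyAttracting.mono (h : IsStronglyAttracting κ C T) (hDC : D ⊆ C) :
    IsStronglyAttracting κ D T :=
  fun x z hz => h x z (hDC hz)

theorem IsStronglyAttracting.norm_sub_le (h : IsStronglyAttracting κ C T) (hκ : 0 ≤ κ)
    (hz : z ∈ C) (x : X) : ‖T x - z‖ ≤ ‖x - z‖ :=
  (pow_le_pow_iff_left₀ (norm_nonneg _) (norm_nonneg _) two_ne_zero).1 <| by
    nlinarith [h x z hz, norm_nonneg (x - T x)]

theorem isStronglyAttracting_averaged [InnerProductSpace ℝ X] {N : X → X}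
    (hN : LipschitzWith 1 N) {t : ℝ} (ht : t ∈ Set.Icc 0 1) :
    IsStronglyAttracting (1 - t) (fixedPoints fun x => (1 - t) • x + t • N x)
      (fun x => (1 - t) • x + t • N x) := by
  intro x z hz
  have hz' : t • (N z - z) = 0 := by
    rw [← sub_eq_zero.2 (show (1 - t) • z + t • N z = z from hz)]; module
  -- `N z` need not equal `z` when `t = 0`, but `t • N z = t • z` always holds
  have hNx : t * ‖N x - z‖ ≤ t * ‖x - z‖ := by
    have : t • (N x - z) = t • (N x - N z) := by
      rw [← sub_eq_zero, ← hz']; module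
    rw [← Real.norm_of_nonneg ht.1, ← norm_smul, this, norm_smul]
    gcongr
    simpa using hN.norm_sub_le x z
  have hTz : (1 - t) • x + t • N x - z = (1 - t) • (x - z) + t • (N x - z) := by module
  have hxT : x - ((1 - t) • x + t • N x) = t • (x - N x) := by module
  rw [hTz, hxT, norm_one_sub_smul_add_smul_sq, norm_smul, Real.norm_of_nonneg ht.1,
    show x - z - (N x - z) = x - N x by abel]
  -- `t ‖N x - z‖² ≤ t ‖x - z‖²` and `(1 - t) t² ≤ t (1 - t)`
  nlinarith [mul_nonneg (sub_nonneg.2 hNx) (add_nonneg (norm_nonneg (N x - z))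
      (norm_nonneg (x - z))), mul_nonneg (mul_nonneg ht.1 (sub_nonneg.2 ht.2))
      (mul_nonneg (sub_nonneg.2 ht.2) (sq_nonneg ‖x - N x‖))]

theorem IsStronglyAttracting.tendsto_sub_of_tendsto_drop {ι : Type*} {l : Filter ι}
    (h : IsStronglyAttracting κ C T) (hκ : 0 < κ) (hz : z ∈ C) {y : ι → X}
    (hdrop : Tendsto (fun i => ‖y i - z‖ ^ 2 - ‖T (y i) - z‖ ^ 2) l (𝓝 0)) :
    Tendsto (fun i => y i - T (y i)) l (𝓝 0) := by
  have hsq : Tendsto (fun i => ‖y i - T (y i)‖ ^ 2) l (𝓝 0) := by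
    refine squeeze_zero (fun _ => by positivity) (fun i => ?_) (by simpa using hdrop.div_const κ)
    rw [le_div_iff₀' hκ]
    linarith [h (y i) z hz]
  rw [tendsto_zero_iff_norm_tendsto_zero]
  simpa using hsq.sqrt

theorem norm_foldl_sub_le {L : List (X → X)} (hL : ∀ f ∈ L, ∀ x, ‖f x - z‖ ≤ ‖x - z‖) (x : X) :
    ‖L.foldl (fun a f => f a) x - z‖ ≤ ‖x - z‖ := by
  induction L generalizing x with
  | nil => rfl
  | cons f L ih =>
    simp only [List.forall_mem_cons] at hL
    exact (ih hL.2 (f x)).trans (hL.1 x)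

theorem tendsto_sub_of_tendsto_foldl_drop {ι : Type*} {l : Filter ι} (hz : z ∈ C)
    {L : List (X → X)} (hL : ∀ f ∈ L, LipschitzWith 1 f ∧ ∃ κ > 0, IsStronglyAttracting κ C f)
    {y : ι → X}
    (hdrop : Tendsto (fun i => ‖y i - z‖ ^ 2 - ‖L.foldl (fun a f => f a) (y i) - z‖ ^ 2) l
      (𝓝 0)) :
    ∀ f ∈ L, Tendsto (fun i => y i - f (y i)) l (𝓝 0) := by
  induction L generalizing y with
  | nil => simp
  | cons f L ih =>
    simp only [List.forall_mem_cons] at hL ⊢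
    obtain ⟨⟨-, κ, hκ, hf⟩, hL⟩ := hL
    set d₁ := fun i => ‖y i - z‖ ^ 2 - ‖f (y i) - z‖ ^ 2
    set d₂ := fun i => ‖f (y i) - z‖ ^ 2 - ‖L.foldl (fun a f => f a) (f (y i)) - z‖ ^ 2
    have hd₁ : ∀ i, 0 ≤ d₁ i := fun i => sub_nonneg.2 <|
      pow_le_pow_left₀ (norm_nonneg _) (hf.norm_sub_le hκ.le hz (y i)) 2
    have hd₂ : ∀ i, 0 ≤ d₂ i := fun i => sub_nonneg.2 <| pow_le_pow_left₀ (norm_nonneg _)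
      (norm_foldl_sub_le (fun g hg => (hL g hg).2.elim fun _ ⟨hκg, hg⟩ =>
        hg.norm_sub_le hκg.le hz) (f (y i))) 2
    -- the decrease along `f :: L` is the sum of the nonnegative decreases along `f` and `L`
    have hsum : Tendsto (d₁ + d₂) l (𝓝 0) := by
      refine hdrop.congr fun i => ?_
      simp only [d₁, d₂, Pi.add_apply, List.foldl_cons]
      ring
    have hf_res : Tendsto (fun i => y i - f (y i)) l (𝓝 0) :=
      hf.tendsto_sub_of_tendsto_drop hκ hz <|
        squeeze_zero hd₁ (fun i => le_add_of_nonneg_right (hd₂ i)) hsum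
    refine ⟨hf_res, fun g hg => ?_⟩
    have hg_res : Tendsto (fun i => f (y i) - g (f (y i))) l (𝓝 0) :=
      ih hL (squeeze_zero hd₂ (fun i => le_add_of_nonneg_left (hd₁ i)) hsum) g hg
    have hshift : Tendsto (fun i => g (f (y i)) - g (y i)) l (𝓝 0) := by
      refine squeeze_zero_norm (fun i => ?_) (tendsto_zero_iff_norm_tendsto_zero.1 hf_res)
      simpa [norm_sub_rev (y i)] using (hL g hg).1.norm_sub_le (f (y i)) (y i)
    simpa using (hf_res.add hg_res).add hshift

section Orbit

variable {S : X → X} (hS : ∀ x, ‖S x - z‖ ≤ ‖x - z‖) (x₀ : X)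
include hS

theorem antitone_norm_iterate_sub : Antitone fun n => ‖S^[n] x₀ - z‖ :=
  antitone_nat_of_succ_le fun n => by
    simpa only [iterate_succ_apply'] using hS (S^[n] x₀)

theorem isBounded_range_iterate : Bornology.IsBounded (Set.range fun n => S^[n] x₀) :=
  (isBounded_closedBall (x := z) (r := ‖x₀ - z‖)).subset <| Set.range_subset_iff.2 fun n => by
    simpa [dist_eq_norm] using antitone_norm_iterate_sub hS x₀ (Nat.zero_le n)

theorem tendsto_norm_iterate_sub_sq_sub :
    Tendsto (fun n => ‖S^[n] x₀ - z‖ ^ 2 - ‖S (S^[n] x₀) - z‖ ^ 2) atTop (𝓝 0) := by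
  set a := fun n => ‖S^[n] x₀ - z‖ ^ 2
  have ha : Tendsto a atTop (𝓝 (⨅ n, a n)) :=
    tendsto_atTop_ciInf (fun m n hmn => pow_le_pow_left₀ (norm_nonneg _)
      (antitone_norm_iterate_sub hS x₀ hmn) 2) ⟨0, Set.forall_mem_range.2 fun n => by positivity⟩
  simpa [a, iterate_succ_apply'] using ha.sub (ha.comp (tendsto_add_atTop_nat 1))

end Orbit

end StronglyAttracting

theorem exists_mem_tendsto_of_fejer {α : Type*} [PseudoMetricSpace α] [CompleteSpace α]
    {x : ℕ → α} {C : Set α} (hC : IsClosed C) (hne : C.Nonempty)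
    (hfejer : ∀ z ∈ C, Antitone fun n => dist (x n) z)
    (hdist : Tendsto (fun n => infDist (x n) C) atTop (𝓝 0)) :
    ∃ z ∈ C, Tendsto x atTop (𝓝 z) := by
  have hcauchy : CauchySeq x := by
    refine Metric.cauchySeq_iff'.2 fun ε hε => ?_
    obtain ⟨N, hN⟩ := (hdist.eventually (gt_mem_nhds (half_pos hε))).exists_forall_of_atTop
    obtain ⟨z, hz, hNz⟩ := (infDist_lt_iff hne).1 (hN N le_rfl)
    refine ⟨N, fun n hn => ?_⟩
    calc dist (x n) (x N) ≤ dist (x n) z + dist (x N) z := dist_triangle_right _ _ _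
      _ ≤ dist (x N) z + dist (x N) z := by gcongr; exact hfejer z hz hn
      _ < ε := by linarith
  obtain ⟨z, hz⟩ := cauchySeq_tendsto_of_complete hcauchy
  refine ⟨z, (hC.mem_iff_infDist_zero hne).2 ?_, hz⟩
  exact tendsto_nhds_unique (((continuous_infDist_pt C).tendsto z).comp hz) hdist

/-- Strong convergence of the cyclic algorithm for averaged, boundedly regular
operators whose fixed point sets form a boundedly regular family. -/
theorem cyclic_algorithm_strong_convergence
    {X : Type*} [NormedAddCommGroup X] [InnerProductSpace ℝ X] [CompleteSpace X]
    (m : ℕ) (T : Fin m → X → X)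
    (havg : ∀ i, ∃ (lam : ℝ) (N : X → X), lam ∈ Set.Ico (0:ℝ) 1 ∧
      (∀ x y, ‖N x - N y‖ ≤ ‖x - y‖) ∧ ∀ x, T i x = (1 - lam) • x + lam • N x)
    (Z : Fin m → Set X) (hZ : ∀ i, Z i = {x | T i x = x})
    (hbrop : ∀ i, ∀ x : ℕ → X, Bornology.IsBounded (Set.range x) →
      Tendsto (fun n => x n - T i (x n)) atTop (nhds 0) →
      Tendsto (fun n => infDist (x n) (Z i)) atTop (nhds 0))
    (hZne : (⋂ i, Z i).Nonempty)
    (hbrfam : ∀ x : ℕ → X, Bornology.IsBounded (Set.range x) →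
      (∀ i, Tendsto (fun n => infDist (x n) (Z i)) atTop (nhds 0)) →
      Tendsto (fun n => infDist (x n) (⋂ i, Z i)) atTop (nhds 0)) :
    ∀ x₀ : X, ∃ z ∈ ⋂ i, Z i,
      Tendsto (fun n => (fun y => (List.ofFn T).foldl (fun a f => f a) y)^[n] x₀)
        atTop (nhds z) := by
  intro x₀
  choose t N ht hN hT using havg
  have hTeq : ∀ i, T i = fun x => (1 - t i) • x + t i • N i x := fun i => funext (hT i)
  have hN' : ∀ i, LipschitzWith 1 (N i) := fun i =>
    LipschitzWith.of_dist_le_mul fun x y => by simpa [dist_eq_norm] using hN i x y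
  have hlip : ∀ i, LipschitzWith 1 (T i) := fun i =>
    hTeq i ▸ (hN' i).averaged (Set.Ico_subset_Icc_self (ht i))
  have hattr : ∀ i, IsStronglyAttracting (1 - t i) (⋂ j, Z j) (T i) := fun i =>
    (hTeq i ▸ isStronglyAttracting_averaged (hN' i) (Set.Ico_subset_Icc_self (ht i))).mono
      ((Set.iInter_subset Z i).trans (hZ i).subset)
  have hL : ∀ f ∈ List.ofFn T,
      LipschitzWith 1 f ∧ ∃ κ > 0, IsStronglyAttracting κ (⋂ j, Z j) f := by
    intro f hf
    obtain ⟨i, rfl⟩ := List.mem_ofFn.1 hf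
    exact ⟨hlip i, 1 - t i, sub_pos.2 (ht i).2, hattr i⟩
  set S := fun y => (List.ofFn T).foldl (fun a f => f a) y
  have hS : ∀ z ∈ ⋂ j, Z j, ∀ y, ‖S y - z‖ ≤ ‖y - z‖ := fun z hz =>
    norm_foldl_sub_le fun f hf => (hL f hf).2.elim fun _ ⟨hκ, h⟩ => h.norm_sub_le hκ.le hz
  obtain ⟨z₀, hz₀⟩ := hZne
  have hbdd := isBounded_range_iterate (hS z₀ hz₀) x₀
  have hres : ∀ i, Tendsto (fun n => S^[n] x₀ - T i (S^[n] x₀)) atTop (𝓝 0) := fun i =>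
    tendsto_sub_of_tendsto_foldl_drop hz₀ hL (tendsto_norm_iterate_sub_sq_sub (hS z₀ hz₀) x₀) _
      (List.mem_ofFn.2 ⟨i, rfl⟩)
  have hC : IsClosed (⋂ j, Z j) :=
    isClosed_iInter fun i => hZ i ▸ isClosed_fixedPoints (hlip i).continuous
  refine exists_mem_tendsto_of_fejer hC ⟨z₀, hz₀⟩ (fun z hz => ?_)
    (hbrfam _ hbdd fun i => hbrop i _ hbdd (hres i))
  simpa only [dist_eq_norm] using antitone_norm_iterate_sub (hS z hz) x₀
end
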